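/- If P and P' are paths in T such that P is a subpath of P' (P ⊆ P'), then S̄(P) ≤ S̄(P') and S̄²(P) ≤ S̄²(P'). -/
import Mathlib


open scoped ENNReal

noncomputable section

/-- A finite tree with positive edge lengths, nonnegative vertex weights,
and a positive cruising speed. -/
structure WeightedTree (V : Type*) [Fintype V] where
  G : SimpleGraph V
  isTree : G.IsTree
  len : Sym2 V → ℝ
  len_pos : ∀ e ∈ G.edgeSet, 0 < len e
  w : V → ℝ
  w_nonneg : ∀ v, 0 ≤ w v
  vt : ℝ
  vt_pos : 0 < vt

namespace WeightedTree

variable {V : Type*} [Fintype V] [DecidableEq V] (T : WeightedTree V)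

/-- `d x y`: the length of the unique path between `x` and `y`. -/
def d (x y : V) : ℝ :=
  (((T.isTree.existsUnique_path x y).choose).edges.map T.len).sum

/-- The closest vertex of the list `l` (the vertex sequence of a path) to `v`. -/
def closest (l : List V) (v : V) : V :=
  if h : ∃ u ∈ l, ∀ u' ∈ l, T.d u v ≤ T.d u' v then h.choose else v

/-- `d(P,v)`: the distance from the path with vertex sequence `l` to `v`. -/
def dP (l : List V) (v : V) : ℝ := T.d (T.closest l v) v

/-- The weight of the branch of the vertex `q` with respect to the path with
vertex sequence `l`: the total weight of all vertices whose closest vertex on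
the path is `q`. -/
def wBranch (l : List V) (q : V) : ℝ :=
  ∑ v ∈ Finset.univ.filter (fun v => T.closest l v = q), T.w v

/-- `w(T)`: total weight of the tree. -/
def wT : ℝ := ∑ v, T.w v

/-- `d̄_P(û,p) = ∑_j w_{T_{p(j)}} d(p(j), p)` for the path with vertex sequence `l`. -/
def dbar (l : List V) (p : V) : ℝ := (l.map (fun q => T.wBranch l q * T.d q p)).sum

/-- `s_p(P) = (1/vt) d̄_P(û,p)` for a vertex `p` of the path. -/
def sOn (l : List V) (p : V) : ℝ := (1 / T.vt) * T.dbar l p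

/-- `s_i(P) = (1/vt) d̄_P(û,p(i))`, where `p(i)` is the closest vertex of the path to `v_i`. -/
def s (l : List V) (v : V) : ℝ := T.sOn l (T.closest l v)

/-- Mean service time `S̄(P)`. -/
def Sbar (l : List V) : ℝ := ∑ v, T.w v * T.s l v

/-- Second moment `S̄²(P)` of the service time. -/
def S2bar (l : List V) : ℝ := ∑ v, T.w v * (T.s l v) ^ 2

/-- `T̄1(P) = (1/vt) ∑ w_i d(P, v_i)`. -/
def T1 (l : List V) : ℝ := (1 / T.vt) * ∑ v, T.w v * T.dP l v

/-- `T̄2(P) = (1/vt) ∑ w_i d̄_P(û, p(i))`. -/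
def T2 (l : List V) : ℝ := (1 / T.vt) * ∑ v, T.w v * T.dbar l (T.closest l v)

/-- The M/G/1 queueing delay `Q̄(P)`, valued in `[0,∞]`. -/
def Qbar (lam : ℝ) (l : List V) : ℝ≥0∞ :=
  if 0 < 1 - lam * T.Sbar l then
    ENNReal.ofReal (lam * T.S2bar l / (2 * (1 - lam * T.Sbar l)))
  else ⊤

/-- The M/G/1 queueing delay `Q̄(P)` as an extended real. -/
def QbarE (lam : ℝ) (l : List V) : EReal :=
  if 0 < 1 - lam * T.Sbar l then
    ((lam * T.S2bar l / (2 * (1 - lam * T.Sbar l)) : ℝ) : EReal)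
  else ⊤

/-- `|P|`: the total length of the path `P`. -/
def plen {a b : V} (P : T.G.Walk a b) : ℝ := (P.edges.map T.len).sum

/-- The objective `F(P) = α1·|P| + α2·(β·(Q̄(P)+T̄2(P)) + (1-β)·T̄1(P))`. -/
def F (α1 α2 β lam : ℝ) {a b : V} (P : T.G.Walk a b) : EReal :=
  ((α1 * T.plen P : ℝ) : EReal) +
    (α2 : EReal) *
      ((β : EReal) * (T.QbarE lam P.support + ((T.T2 P.support : ℝ) : EReal)) +
        (((1 - β) * T.T1 P.support : ℝ) : EReal))

end WeightedTree

namespace WeightedTree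

open SimpleGraph

set_option linter.unusedSectionVars false

variable {V : Type*} [Fintype V] [DecidableEq V] (T : WeightedTree V)

private lemma sum_map_le_of_subset' {α : Type*} [DecidableEq α] {l1 l2 : List α} (h : l1 ⊆ l2)
    (hn : l1.Nodup) (f : α → ℝ) (hf : ∀ a ∈ l2, 0 ≤ f a) :
    (l1.map f).sum ≤ (l2.map f).sum := by
  rw [← List.sum_toFinset f hn]
  calc l1.toFinset.sum f ≤ l2.toFinset.sum f := by
        apply Finset.sum_le_sum_of_subset_of_nonneg
        · intro a ha; simp only [List.mem_toFinset] at *; exact h ha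
        · intro a ha _; exact hf a (List.mem_toFinset.1 ha)
    _ = (l2.dedup.map f).sum := by
        rw [← List.sum_toFinset f l2.nodup_dedup]; congr 1; ext a; simp
    _ ≤ (l2.map f).sum := by
        apply List.Sublist.sum_le_sum ((l2.dedup_sublist).map f)
        intro a ha
        obtain ⟨b, hb, rfl⟩ := List.mem_map.1 ha
        exact hf b hb

lemma d_eq {x y : V} (W : T.G.Walk x y) (hW : W.IsPath) :
    T.d x y = (W.edges.map T.len).sum := by
  have h := (T.isTree.existsUnique_path x y).choose_spec
  rw [d, h.2 W hW]

lemma edges_sum_nonneg {x y : V} (W : T.G.Walk x y) : 0 ≤ (W.edges.map T.len).sum := by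
  apply List.sum_nonneg
  intro r hr
  obtain ⟨e, he, rfl⟩ := List.mem_map.1 hr
  exact (T.len_pos e (Walk.edges_subset_edgeSet _ he)).le

lemma d_nonneg (x y : V) : 0 ≤ T.d x y := by
  rw [T.d_eq (T.isTree.existsUnique_path x y).choose
    (T.isTree.existsUnique_path x y).choose_spec.1]
  exact T.edges_sum_nonneg _

lemma d_self (x : V) : T.d x x = 0 := by
  rw [T.d_eq Walk.nil Walk.IsPath.nil]; simp

lemma d_symm (x y : V) : T.d x y = T.d y x := by
  have h := (T.isTree.existsUnique_path x y).choose_spec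
  rw [T.d_eq _ h.1, T.d_eq _ h.1.reverse, Walk.edges_reverse, List.map_reverse,
    List.sum_reverse]

lemma d_eq_zero_iff {x y : V} : T.d x y = 0 ↔ x = y := by
  constructor
  · intro h
    by_contra hne
    have hspec := (T.isTree.existsUnique_path x y).choose_spec
    set W := (T.isTree.existsUnique_path x y).choose with hWdef
    have hne' : W.edges ≠ [] := by
      intro he
      have hlen : W.length = 0 := by
        have := congrArg List.length he
        simpa using this
      exact hne (Walk.eq_of_length_eq_zero hlen)
    have : 0 < (W.edges.map T.len).sum := by
      apply List.sum_pos
      · intro r hr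
        obtain ⟨e, he, rfl⟩ := List.mem_map.1 hr
        exact T.len_pos e (Walk.edges_subset_edgeSet _ he)
      · simpa using hne'
    rw [T.d_eq W hspec.1] at h
    linarith
  · rintro rfl; exact T.d_self x

lemma d_split {x z : V} (W : T.G.Walk x z) (hW : W.IsPath) {y : V} (hy : y ∈ W.support) :
    T.d x z = T.d x y + T.d y z := by
  rw [T.d_eq _ (hW.takeUntil hy), T.d_eq _ (hW.dropUntil hy), T.d_eq W hW]
  conv_lhs => rw [← Walk.take_spec W hy]
  rw [Walk.edges_append, List.map_append, List.sum_append]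

lemma d_triangle (x y z : V) : T.d x z ≤ T.d x y + T.d y z := by
  have h1 := (T.isTree.existsUnique_path x y).choose_spec
  have h2 := (T.isTree.existsUnique_path y z).choose_spec
  set W1 := (T.isTree.existsUnique_path x y).choose
  set W2 := (T.isTree.existsUnique_path y z).choose
  have hd : T.d x y + T.d y z = ((W1.append W2).edges.map T.len).sum := by
    rw [T.d_eq _ h1.1, T.d_eq _ h2.1, Walk.edges_append, List.map_append, List.sum_append]
  rw [hd, T.d_eq (W1.append W2).bypass (W1.append W2).bypass_isPath]
  apply sum_map_le_of_subset' (Walk.edges_bypass_subset _)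
    ((W1.append W2).bypass_isPath.isTrail.edges_nodup)
  intro e he
  exact (T.len_pos e (Walk.edges_subset_edgeSet _ he)).le

lemma exists_path_through {a b : V} (Q : T.G.Walk a b) (hQ : Q.IsPath) {x y : V}
    (hx : x ∈ Q.support) (hy : y ∈ Q.support) :
    ∃ W : T.G.Walk x y, W.IsPath ∧ ∀ z ∈ W.support, z ∈ Q.support := by
  by_cases h : y ∈ (Q.dropUntil x hx).support
  · refine ⟨(Q.dropUntil x hx).takeUntil y h, (hQ.dropUntil hx).takeUntil h, ?_⟩
    intro z hz
    exact Walk.support_dropUntil_subset _ _ ((Walk.support_takeUntil_subset _ _) hz)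
  · have h' : y ∈ (Q.takeUntil x hx).support := by
      have := hy
      rw [← Walk.take_spec Q hx, Walk.mem_support_append_iff] at this
      tauto
    have h'' : y ∈ (Q.takeUntil x hx).reverse.support := by
      rwa [Walk.support_reverse, List.mem_reverse]
    refine ⟨((Q.takeUntil x hx).reverse).takeUntil y h'',
      ((hQ.takeUntil hx).reverse).takeUntil h'', ?_⟩
    intro z hz
    have : z ∈ (Q.takeUntil x hx).reverse.support := Walk.support_takeUntil_subset _ _ hz
    rw [Walk.support_reverse, List.mem_reverse] at this
    exact Walk.support_takeUntil_subset _ _ this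

lemma closest_spec {l : List V} (hl : l ≠ []) (v : V) :
    T.closest l v ∈ l ∧ ∀ q ∈ l, T.d (T.closest l v) v ≤ T.d q v := by
  have hne : l.toFinset.Nonempty := by
    obtain ⟨a, ha⟩ := List.exists_mem_of_ne_nil l hl
    exact ⟨a, List.mem_toFinset.2 ha⟩
  obtain ⟨u, hu, humin⟩ := Finset.exists_min_image l.toFinset (fun u => T.d u v) hne
  have hex : ∃ u ∈ l, ∀ u' ∈ l, T.d u v ≤ T.d u' v :=
    ⟨u, List.mem_toFinset.1 hu, fun u' hu' => humin u' (List.mem_toFinset.2 hu')⟩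
  rw [closest, dif_pos hex]
  exact ⟨hex.choose_spec.1, hex.choose_spec.2⟩

lemma gate {a b : V} (Q : T.G.Walk a b) (hQ : Q.IsPath) {v c : V} (hc : c ∈ Q.support)
    (hmin : ∀ q ∈ Q.support, T.d c v ≤ T.d q v) {q : V} (hq : q ∈ Q.support) :
    T.d v q = T.d v c + T.d c q := by
  have h1 := (T.isTree.existsUnique_path v c).choose_spec
  set W1 := (T.isTree.existsUnique_path v c).choose with hW1
  obtain ⟨W2, hW2, hW2sub⟩ := T.exists_path_through Q hQ hc hq
  have hinter : ∀ z ∈ W1.support, z ∈ W2.support → z = c := by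
    intro z hz1 hz2
    have hzl := hW2sub z hz2
    have hsplit : T.d v c = T.d v z + T.d z c := T.d_split W1 h1.1 hz1
    have h2 := hmin z hzl
    have s1 : T.d c v = T.d v c := T.d_symm c v
    have s2 : T.d z v = T.d v z := T.d_symm z v
    have hzc := T.d_nonneg z c
    have : T.d z c = 0 := by linarith
    exact T.d_eq_zero_iff.1 this
  have hcnotail : c ∉ W2.support.tail := by
    have hcons : W2.support = c :: W2.support.tail := W2.support_eq_cons
    have := hW2.support_nodup
    rw [hcons] at this
    exact (List.nodup_cons.1 this).1
  have hpath : (W1.append W2).IsPath := by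
    rw [Walk.isPath_def, Walk.support_append]
    apply List.Nodup.append h1.1.support_nodup
    · have hcons : W2.support = c :: W2.support.tail := W2.support_eq_cons
      have := hW2.support_nodup
      rw [hcons] at this
      exact (List.nodup_cons.1 this).2
    · intro z hz1 hz2
      have : z = c := hinter z hz1 (List.mem_of_mem_tail hz2)
      subst this
      exact hcnotail hz2
  have : T.d v q = ((W1.append W2).edges.map T.len).sum := T.d_eq _ hpath
  rw [this, Walk.edges_append, List.map_append, List.sum_append,
    ← T.d_eq W1 h1.1, ← T.d_eq W2 hW2]

lemma d_closest_le {a b a' b' : V} (P : T.G.Walk a b) (hP : P.IsPath)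
    (P' : T.G.Walk a' b') (hP' : P'.IsPath) (hsub : P.support ⊆ P'.support) (u v : V) :
    T.d (T.closest P.support u) (T.closest P.support v) ≤
      T.d (T.closest P'.support u) (T.closest P'.support v) := by
  obtain ⟨hcu_mem, hcu_min⟩ := T.closest_spec P.support_ne_nil u
  obtain ⟨hcv_mem, hcv_min⟩ := T.closest_spec P.support_ne_nil v
  obtain ⟨hcu'_mem, hcu'_min⟩ := T.closest_spec P'.support_ne_nil u
  obtain ⟨hcv'_mem, hcv'_min⟩ := T.closest_spec P'.support_ne_nil v
  set cu := T.closest P.support u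
  set cv := T.closest P.support v
  set cu' := T.closest P'.support u
  set cv' := T.closest P'.support v
  have gate_u : ∀ q ∈ P'.support, T.d u q = T.d u cu' + T.d cu' q :=
    fun q hq => T.gate P' hP' hcu'_mem hcu'_min hq
  have gate_v : ∀ q ∈ P'.support, T.d v q = T.d v cv' + T.d cv' q :=
    fun q hq => T.gate P' hP' hcv'_mem hcv'_min hq
  have hcu_min' : ∀ q ∈ P.support, T.d cu cu' ≤ T.d q cu' := by
    intro q hq
    have e1 := gate_u q (hsub hq)
    have e2 := gate_u cu (hsub hcu_mem)
    have m := hcu_min q hq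
    have s1 : T.d cu cu' = T.d cu' cu := T.d_symm _ _
    have s2 : T.d cu u = T.d u cu := T.d_symm _ _
    have s3 : T.d q u = T.d u q := T.d_symm _ _
    have s4 : T.d q cu' = T.d cu' q := T.d_symm _ _
    linarith
  have hcv_min' : ∀ q ∈ P.support, T.d cv cv' ≤ T.d q cv' := by
    intro q hq
    have e1 := gate_v q (hsub hq)
    have e2 := gate_v cv (hsub hcv_mem)
    have m := hcv_min q hq
    have s1 : T.d cv cv' = T.d cv' cv := T.d_symm _ _
    have s2 : T.d cv v = T.d v cv := T.d_symm _ _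
    have s3 : T.d q v = T.d v q := T.d_symm _ _
    have s4 : T.d q cv' = T.d cv' q := T.d_symm _ _
    linarith
  have i1 : T.d cu' cv = T.d cu' cu + T.d cu cv :=
    T.gate P hP hcu_mem hcu_min' hcv_mem
  have i2 : T.d cv' cu = T.d cv' cv + T.d cv cu :=
    T.gate P hP hcv_mem hcv_min' hcu_mem
  have t1 := T.d_triangle cu' cv' cv
  have t2 := T.d_triangle cv' cu' cu
  have s5 : T.d cv cu = T.d cu cv := T.d_symm _ _
  have s6 : T.d cv' cu' = T.d cu' cv' := T.d_symm _ _
  linarith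

lemma dbar_eq {l : List V} (hne : l ≠ []) (hnd : l.Nodup) (p : V) :
    T.dbar l p = ∑ u : V, T.w u * T.d (T.closest l u) p := by
  rw [dbar, ← List.sum_toFinset _ hnd]
  calc l.toFinset.sum (fun q => T.wBranch l q * T.d q p)
      = ∑ q ∈ l.toFinset, ∑ v ∈ Finset.univ.filter (fun v => T.closest l v = q),
          T.w v * T.d (T.closest l v) p := by
        refine Finset.sum_congr rfl fun q _ => ?_
        rw [wBranch, Finset.sum_mul]
        refine Finset.sum_congr rfl fun v hv => ?_
        rw [(Finset.mem_filter.1 hv).2]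
    _ = ∑ u : V, T.w u * T.d (T.closest l u) p := by
        apply Finset.sum_fiberwise_of_maps_to
        intro v _
        exact List.mem_toFinset.2 (T.closest_spec hne v).1

lemma s_eq {l : List V} (hne : l ≠ []) (hnd : l.Nodup) (v : V) :
    T.s l v = (1 / T.vt) * ∑ u : V, T.w u * T.d (T.closest l u) (T.closest l v) := by
  rw [s, sOn, T.dbar_eq hne hnd]

lemma s_nonneg {l : List V} (hne : l ≠ []) (hnd : l.Nodup) (v : V) : 0 ≤ T.s l v := by
  rw [T.s_eq hne hnd]
  apply mul_nonneg (by have := T.vt_pos; positivity)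
  apply Finset.sum_nonneg
  intro u _
  exact mul_nonneg (T.w_nonneg u) (T.d_nonneg _ _)

end WeightedTree

/-- if `P` is a subpath of `P'` then `S̄(P) ≤ S̄(P')` and `S̄²(P) ≤ S̄²(P')`. -/
theorem Sbar_S2bar_monotone {V : Type*} [Fintype V] [DecidableEq V] (T : WeightedTree V)
    {a b a' b' : V} (P : T.G.Walk a b) (hP : P.IsPath)
    (P' : T.G.Walk a' b') (hP' : P'.IsPath)
    (hsub : P.support <:+: P'.support) :
    T.Sbar P.support ≤ T.Sbar P'.support ∧ T.S2bar P.support ≤ T.S2bar P'.support     := by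
  have hsubset : P.support ⊆ P'.support := hsub.subset
  have hkey : ∀ v, T.s P.support v ≤ T.s P'.support v := by
    intro v
    rw [T.s_eq P.support_ne_nil hP.support_nodup,
      T.s_eq P'.support_ne_nil hP'.support_nodup]
    apply mul_le_mul_of_nonneg_left _ (by have := T.vt_pos; positivity)
    apply Finset.sum_le_sum
    intro u _
    exact mul_le_mul_of_nonneg_left (T.d_closest_le P hP P' hP' hsubset u v) (T.w_nonneg u)
  constructor
  · simp only [WeightedTree.Sbar]
    apply Finset.sum_le_sum
    intro v _
    exact mul_le_mul_of_nonneg_left (hkey v) (T.w_nonneg v)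
  · simp only [WeightedTree.S2bar]
    apply Finset.sum_le_sum
    intro v _
    refine mul_le_mul_of_nonneg_left ?_ (T.w_nonneg v)
    exact pow_le_pow_left₀ (T.s_nonneg P.support_ne_nil hP.support_nodup v) (hkey v) 2
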